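/- Let L_δ, Λ_δ, L₀, Λ₀ : V → V all be linear, self-adjoint, and positive semidefinite, with ⟨Λ₀ f, g⟩ ≤ K ‖f‖ ‖g‖ for all f, g ∈ V and with ‖(Λ_δ − Λ₀) v‖ ≤ C_a δ² ‖v‖ for all v ∈ V, where K, C_a ≥ 0 and δ > 0. Let u^δ, u⁰ : [0, T] → V be differentiable, satisfy (u^δ)'(t) = −ε L_δ u^δ(t) − (1/ε) W'(u^δ(t)) − γ Λ_δ(u^δ(t) − ω𝟙) − M ⟨u^δ(t) − ω𝟙, 𝟙⟩ 𝟙 and (u⁰)'(t) = −ε L₀ u⁰(t) − (1/ε) W'(u⁰(t)) − γ Λ₀(u⁰(t) − ω𝟙) − M ⟨u⁰(t) − ω𝟙, 𝟙⟩ 𝟙 with the same initial data u^δ(0) = u⁰(0), and suppose that ‖(L_δ − L₀) u⁰(t)‖ ≤ C_b δ² and ‖u^δ(t) − ω𝟙‖ ≤ R for all t ∈ [0, T], where C_b, R ≥ 0. Then for every t ∈ [0, T], ‖u^δ(t) − u⁰(t)‖ ≤ ((ε C_b + γ C_a R) δ² / C₃)(e^{C₃ t} − 1), where C₃ = L_W/ε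 + γ K + M |Ω| > 0. In particular ‖u^δ(t) − u⁰(t)‖ ≤ C δ² with C independent of δ. -/

import Mathlib

/-! The error `e = uδ - u0` satisfies `e' = (F uδ - F u0) - p`, where `F` is the flow field
built from `Lδ` and `Λ0`, and `p = ε (Lδ - L0) u0 + γ (Λδ - Λ0) (uδ - ω𝟙)` is a consistency error of
size at most `(ε Cb + γ Ca R) δ²`. Positivity of `Lδ` and `Λ0`, the sign of the mass penalty and the
Lipschitz bound on `W'` make `F` one-sided Lipschitz with constant `LW / ε ≤ C₃`, so `‖e‖` has right
derivative at most `C₃ ‖e‖ + ‖p‖`, and Grönwall's inequality with `e 0 = 0` gives the bound. -/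

open Real

/-- Discrete inner product `⟨f, g⟩ = c · Σ_j f_j g_j` on `V = Fin m → ℝ`. -/
noncomputable def dip (m : ℕ) (c : ℝ) (f g : Fin m → ℝ) : ℝ :=
  c * ∑ j, f j * g j

/-- Discrete norm induced by `dip`. -/
noncomputable def dnorm (m : ℕ) (c : ℝ) (f : Fin m → ℝ) : ℝ :=
  Real.sqrt (dip m c f f)

/-- The all-ones vector `𝟙`. -/
def ones (m : ℕ) : Fin m → ℝ := fun _ => 1

open Set
open scoped RealInnerProductSpace

section NormGronwall

variable {F : Type*} [NormedAddCommGroup F] [InnerProductSpace ℝ F]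

theorem HasDerivWithinAt.norm_of_ne_zero {f : ℝ → F} {f' : F} {s : Set ℝ} {x : ℝ}
    (hf : HasDerivWithinAt f f' s x) (h0 : f x ≠ 0) :
    HasDerivWithinAt (‖f ·‖) (⟪f x, f'⟫ / ‖f x‖) s x := by
  have h := hf.norm_sq.sqrt (by positivity)
  simp only [Real.sqrt_sq (norm_nonneg _)] at h
  convert h using 1
  field_simp

/-- `hzero` is needed because `‖f‖` is not differentiable at a zero of `f`; there its right slope
is only bounded by `‖f' x‖`. -/
theorem norm_le_gronwallBound_of_inner_deriv_right_le {f f' : ℝ → F} {δ K ε a b : ℝ}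
    (hf : ContinuousOn f (Icc a b)) (hf' : ∀ x ∈ Ico a b, HasDerivWithinAt f (f' x) (Ici x) x)
    (ha : ‖f a‖ ≤ δ) (hinner : ∀ x ∈ Ico a b, ⟪f' x, f x⟫ ≤ K * ‖f x‖ ^ 2 + ε * ‖f x‖)
    (hzero : ∀ x ∈ Ico a b, f x = 0 → ‖f' x‖ ≤ ε) :
    ∀ x ∈ Icc a b, ‖f x‖ ≤ gronwallBound δ K ε (x - a) := by
  refine le_gronwallBound_of_liminf_deriv_right_le (f' := fun x => K * ‖f x‖ + ε)
    (continuous_norm.comp_continuousOn hf) (fun x hx r hr => ?_) ha fun _ _ => le_rfl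
  by_cases h0 : f x = 0
  · refine (hf' x hx).liminf_right_slope_norm_le ((hzero x hx h0).trans_lt ?_)
    simpa [h0] using hr
  · have hpos : 0 < ‖f x‖ := norm_pos_iff.2 h0
    have hlt : ⟪f x, f' x⟫ / ‖f x‖ < r := by
      rw [div_lt_iff₀ hpos, real_inner_comm]
      nlinarith [hinner x hx]
    refine (((hf' x hx).norm_of_ne_zero h0).liminf_right_slope_le hlt).mono fun z hz => ?_
    rwa [slope_def_field, div_eq_inv_mul] at hz

end NormGronwall

noncomputable def weightedEuclidean (m : ℕ) (c : ℝ) :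
    (Fin m → ℝ) →L[ℝ] EuclideanSpace ℝ (Fin m) :=
  √c • (EuclideanSpace.equiv (Fin m) ℝ).symm.toContinuousLinearMap

section DiscreteInner

variable {m : ℕ} {c : ℝ}

theorem inner_weightedEuclidean (hc : 0 ≤ c) (f g : Fin m → ℝ) :
    ⟪weightedEuclidean m c f, weightedEuclidean m c g⟫ = dip m c f g := by
  simp only [weightedEuclidean, smul_apply, real_inner_smul_left, real_inner_smul_right]
  rw [← mul_assoc, Real.mul_self_sqrt hc, dip]
  simp [PiLp.inner_apply, mul_comm]

theorem weightedEuclidean_eq_zero_iff (hc : 0 < c) {f : Fin m → ℝ} :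
    weightedEuclidean m c f = 0 ↔ f = 0 := by
  simp [weightedEuclidean, (Real.sqrt_pos.2 hc).ne']

theorem norm_weightedEuclidean (hc : 0 ≤ c) (f : Fin m → ℝ) :
    ‖weightedEuclidean m c f‖ = dnorm m c f := by
  rw [dnorm, ← inner_weightedEuclidean hc, real_inner_self_eq_norm_sq, Real.sqrt_sq (norm_nonneg _)]

theorem dip_comm (f g : Fin m → ℝ) : dip m c f g = dip m c g f := by
  simp only [dip, mul_comm (f _)]

theorem dnorm_sq (hc : 0 ≤ c) (f : Fin m → ℝ) : dnorm m c f ^ 2 = dip m c f f := by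
  rw [← norm_weightedEuclidean hc, ← real_inner_self_eq_norm_sq, inner_weightedEuclidean hc]

theorem abs_dip_le_dnorm_mul_dnorm (hc : 0 ≤ c) (f g : Fin m → ℝ) :
    |dip m c f g| ≤ dnorm m c f * dnorm m c g := by
  simpa only [inner_weightedEuclidean hc, norm_weightedEuclidean hc] using
    abs_real_inner_le_norm (weightedEuclidean m c f) (weightedEuclidean m c g)

theorem dip_sub_left (f g h : Fin m → ℝ) : dip m c (f - g) h = dip m c f h - dip m c g h := by
  simp only [dip, Pi.sub_apply, sub_mul, Finset.sum_sub_distrib, mul_sub]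

theorem dnorm_add_le (hc : 0 ≤ c) (f g : Fin m → ℝ) :
    dnorm m c (f + g) ≤ dnorm m c f + dnorm m c g := by
  simp only [← norm_weightedEuclidean hc, map_add]
  exact norm_add_le _ _

theorem dnorm_smul (hc : 0 ≤ c) (a : ℝ) (f : Fin m → ℝ) :
    dnorm m c (a • f) = |a| * dnorm m c f := by
  rw [← norm_weightedEuclidean hc, map_smul, norm_smul, Real.norm_eq_abs, norm_weightedEuclidean hc]

theorem dnorm_smul_add_smul_le (hc : 0 ≤ c) {a b : ℝ} (ha : 0 ≤ a) (hb : 0 ≤ b)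
    (f g : Fin m → ℝ) : dnorm m c (a • f + b • g) ≤ a * dnorm m c f + b * dnorm m c g := by
  refine (dnorm_add_le hc _ _).trans_eq ?_
  rw [dnorm_smul hc, dnorm_smul hc, abs_of_nonneg ha, abs_of_nonneg hb]

theorem dnorm_zero : dnorm m c 0 = 0 := by
  simp [dnorm, dip]

theorem dnorm_neg (f : Fin m → ℝ) : dnorm m c (-f) = dnorm m c f := by
  simp [dnorm, dip]

theorem dnorm_nonneg (f : Fin m → ℝ) : 0 ≤ dnorm m c f :=
  Real.sqrt_nonneg _

theorem dnorm_le_gronwallBound_of_dip_deriv_right_le (hc : 0 < c) {u u' : ℝ → Fin m → ℝ}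
    {δ K ε a b : ℝ} (hu : ContinuousOn u (Icc a b))
    (hu' : ∀ x ∈ Ico a b, HasDerivWithinAt u (u' x) (Ici x) x) (ha : dnorm m c (u a) ≤ δ)
    (hdip : ∀ x ∈ Ico a b, dip m c (u' x) (u x) ≤ K * dnorm m c (u x) ^ 2 + ε * dnorm m c (u x))
    (hzero : ∀ x ∈ Ico a b, u x = 0 → dnorm m c (u' x) ≤ ε) :
    ∀ x ∈ Icc a b, dnorm m c (u x) ≤ gronwallBound δ K ε (x - a) := by
  simp only [← norm_weightedEuclidean hc.le, ← inner_weightedEuclidean hc.le] at ha hdip hzero ⊢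
  refine norm_le_gronwallBound_of_inner_deriv_right_le (f := weightedEuclidean m c ∘ u)
    ((weightedEuclidean m c).continuous.comp_continuousOn hu)
    (fun x hx => (weightedEuclidean m c).hasFDerivAt.comp_hasDerivWithinAt x (hu' x hx))
    ha hdip fun x hx h0 => hzero x hx ((weightedEuclidean_eq_zero_iff hc).1 h0)

theorem neg_dip_comp_sub_comp_le (hc : 0 ≤ c) {g : ℝ → ℝ} {C : ℝ}
    (hg : ∀ a b, |g a - g b| ≤ C * |a - b|) (u v : Fin m → ℝ) :
    -dip m c ((fun j => g (u j)) - fun j => g (v j)) (u - v) ≤ C * dnorm m c (u - v) ^ 2 := by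
  rw [dnorm_sq hc, dip, dip, ← mul_neg, mul_left_comm, Finset.mul_sum, ← Finset.sum_neg_distrib]
  refine mul_le_mul_of_nonneg_left (Finset.sum_le_sum fun j _ => ?_) hc
  simp only [Pi.sub_apply]
  calc -((g (u j) - g (v j)) * (u j - v j)) ≤ |g (u j) - g (v j)| * |u j - v j| := by
        rw [← abs_mul]; exact neg_le_abs _
    _ ≤ C * |u j - v j| * |u j - v j| := by gcongr; exact hg _ _
    _ = C * ((u j - v j) * (u j - v j)) := by rw [mul_assoc, abs_mul_abs_self]

end DiscreteInner

theorem abs_deriv_sub_deriv_le {W : ℝ → ℝ} {LW : ℝ} (hW : ContDiff ℝ 2 W)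
    (hW2 : ∀ s, |deriv (deriv W) s| ≤ LW) (a b : ℝ) :
    |deriv W a - deriv W b| ≤ LW * |a - b| := by
  have hdiff : Differentiable ℝ (deriv W) := (hW.deriv' (n := 1)).differentiable one_ne_zero
  exact Convex.norm_image_sub_le_of_norm_deriv_le (fun x _ => hdiff x) (fun x _ => hW2 x)
    convex_univ (mem_univ b) (mem_univ a)

/-- Both flows of the theorem read `u' = pnacokField … u`, definitionally. -/
noncomputable def pnacokField (m : ℕ) (c ε γ M ω : ℝ) (W : ℝ → ℝ)
    (L Λ : (Fin m → ℝ) →ₗ[ℝ] (Fin m → ℝ)) (u : Fin m → ℝ) : Fin m → ℝ :=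
  -(ε • L u) - (1 / ε) • (fun j => deriv W (u j)) - γ • Λ (u - ω • ones m)
    - (M * dip m c (u - ω • ones m) (ones m)) • ones m

section PnacokField

variable {m : ℕ} {c ε γ M ω : ℝ} {W : ℝ → ℝ}

theorem pnacokField_sub_pnacokField (L L' Λ Λ' : (Fin m → ℝ) →ₗ[ℝ] (Fin m → ℝ))
    (u v : Fin m → ℝ) :
    pnacokField m c ε γ M ω W L Λ u - pnacokField m c ε γ M ω W L' Λ' v
      = (pnacokField m c ε γ M ω W L Λ' u - pnacokField m c ε γ M ω W L Λ' v)
        - (ε • (L v - L' v) + γ • (Λ (u - ω • ones m) - Λ' (u - ω • ones m))) := by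
  simp only [pnacokField]
  module

theorem dip_pnacokField_sub_pnacokField_le (hc : 0 ≤ c) (hε : 0 < ε) (hγ : 0 ≤ γ) (hM : 0 ≤ M)
    {L Λ : (Fin m → ℝ) →ₗ[ℝ] (Fin m → ℝ)} (hL : ∀ f, 0 ≤ dip m c (L f) f)
    (hΛ : ∀ f, 0 ≤ dip m c (Λ f) f) {C : ℝ} (hW : ∀ a b, |deriv W a - deriv W b| ≤ C * |a - b|)
    (u v : Fin m → ℝ) :
    dip m c (pnacokField m c ε γ M ω W L Λ u - pnacokField m c ε γ M ω W L Λ v) (u - v)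
      ≤ C / ε * dnorm m c (u - v) ^ 2 := by
  set e := u - v
  have hdiff : pnacokField m c ε γ M ω W L Λ u - pnacokField m c ε γ M ω W L Λ v
      = -(ε • L e) - (1 / ε) • ((fun j => deriv W (u j)) - fun j => deriv W (v j)) - γ • Λ e
        - (M * dip m c e (ones m)) • ones m := by
    simp only [pnacokField, e, map_sub, dip_sub_left]
    module
  rw [hdiff, ← inner_weightedEuclidean hc]
  simp only [map_sub, map_neg, map_smul, inner_sub_left, inner_neg_left, real_inner_smul_left,
    inner_weightedEuclidean hc]
  rw [dip_comm (ones m)]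
  have hWe : 1 / ε * -(dip m c (fun j => deriv W (u j)) e - dip m c (fun j => deriv W (v j)) e)
      ≤ 1 / ε * (C * dnorm m c e ^ 2) := by
    rw [← dip_sub_left]
    exact mul_le_mul_of_nonneg_left (neg_dip_comp_sub_comp_le hc hW u v) (by positivity)
  have hLe := mul_nonneg hε.le (hL e)
  have hΛe := mul_nonneg hγ (hΛ e)
  have hMe : 0 ≤ M * dip m c e (ones m) * dip m c e (ones m) := by
    rw [mul_assoc]; exact mul_nonneg hM (mul_self_nonneg _)
  rw [show C / ε * dnorm m c e ^ 2 = 1 / ε * (C * dnorm m c e ^ 2) by ring]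
  linarith

theorem dip_pnacokField_sub_pnacokField_le_of_dnorm_le (hc : 0 ≤ c) (hε : 0 < ε) (hγ : 0 ≤ γ)
    (hM : 0 ≤ M) {L L' Λ Λ' : (Fin m → ℝ) →ₗ[ℝ] (Fin m → ℝ)} (hL : ∀ f, 0 ≤ dip m c (L f) f)
    (hΛ' : ∀ f, 0 ≤ dip m c (Λ' f) f) {C : ℝ}
    (hW : ∀ a b, |deriv W a - deriv W b| ≤ C * |a - b|) {K E : ℝ} (hK : C / ε ≤ K)
    {u v : Fin m → ℝ}
    (hE : dnorm m c (ε • (L v - L' v) + γ • (Λ (u - ω • ones m) - Λ' (u - ω • ones m))) ≤ E) :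
    dip m c (pnacokField m c ε γ M ω W L Λ u - pnacokField m c ε γ M ω W L' Λ' v) (u - v)
      ≤ K * dnorm m c (u - v) ^ 2 + E * dnorm m c (u - v) := by
  have hmono := dip_pnacokField_sub_pnacokField_le hc hε hγ hM (ω := ω) hL hΛ' hW u v
  have hpert := (neg_le_abs _).trans (abs_dip_le_dnorm_mul_dnorm hc
    (ε • (L v - L' v) + γ • (Λ (u - ω • ones m) - Λ' (u - ω • ones m))) (u - v))
  have hKd := mul_le_mul_of_nonneg_right hK (sq_nonneg (dnorm m c (u - v)))
  have hEd := mul_le_mul_of_nonneg_right hE (dnorm_nonneg (c := c) (u - v))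
  rw [pnacokField_sub_pnacokField, dip_sub_left]
  linarith

theorem dnorm_pnacokField_sub_pnacokField (L L' Λ Λ' : (Fin m → ℝ) →ₗ[ℝ] (Fin m → ℝ))
    (u : Fin m → ℝ) :
    dnorm m c (pnacokField m c ε γ M ω W L Λ u - pnacokField m c ε γ M ω W L' Λ' u)
      = dnorm m c (ε • (L u - L' u) + γ • (Λ (u - ω • ones m) - Λ' (u - ω • ones m))) := by
  rw [pnacokField_sub_pnacokField, sub_self, zero_sub, dnorm_neg]

end PnacokField

theorem semidiscrete_pNACOK_asymptotic_compatibility_general (m : ℕ)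
    (c : ℝ) (hc : 0 < c)
    (Lδ Λδ L0 Λ0 : (Fin m → ℝ) →ₗ[ℝ] (Fin m → ℝ))
    (hLδpsd : ∀ f, 0 ≤ dip m c (Lδ f) f)
    (hΛ0psd : ∀ f, 0 ≤ dip m c (Λ0 f) f)
    (K : ℝ) (hK : 0 ≤ K)
    (Ca : ℝ) (hCa : 0 ≤ Ca) (δ : ℝ)
    (hΛclose : ∀ v : Fin m → ℝ, dnorm m c (Λδ v - Λ0 v) ≤ Ca * δ ^ 2 * dnorm m c v)
    (W : ℝ → ℝ) (hW : ContDiff ℝ 2 W)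
    (LW : ℝ) (hLW : 0 < LW) (hW2 : ∀ s : ℝ, |deriv (deriv W) s| ≤ LW)
    (ε γ M : ℝ) (hε : 0 < ε) (hγ : 0 < γ) (hM : 0 < M) (ω : ℝ)
    (T : ℝ)
    (uδ u0 : ℝ → (Fin m → ℝ))
    (hodeδ : ∀ t ∈ Set.Icc (0:ℝ) T, HasDerivAt uδ
      (-(ε • Lδ (uδ t)) - (1 / ε) • (fun j => deriv W (uδ t j))
        - γ • Λδ (uδ t - ω • ones m)
        - (M * dip m c (uδ t - ω • ones m) (ones m)) • ones m) t)
    (hode0 : ∀ t ∈ Set.Icc (0:ℝ) T, HasDerivAt u0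
      (-(ε • L0 (u0 t)) - (1 / ε) • (fun j => deriv W (u0 t j))
        - γ • Λ0 (u0 t - ω • ones m)
        - (M * dip m c (u0 t - ω • ones m) (ones m)) • ones m) t)
    (hinit : uδ 0 = u0 0)
    (Cb : ℝ)
    (hLclose : ∀ t ∈ Set.Icc (0:ℝ) T, dnorm m c (Lδ (u0 t) - L0 (u0 t)) ≤ Cb * δ ^ 2)
    (R : ℝ)
    (hubdd : ∀ t ∈ Set.Icc (0:ℝ) T, dnorm m c (uδ t - ω • ones m) ≤ R) :
    ∀ t ∈ Set.Icc (0:ℝ) T,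
      dnorm m c (uδ t - u0 t)
        ≤ ((ε * Cb + γ * Ca * R) * δ ^ 2 / (LW / ε + γ * K + M * (c * m)))
            * (Real.exp ((LW / ε + γ * K + M * (c * m)) * t) - 1) := by
  set C3 := LW / ε + γ * K + M * (c * m)
  have hC3_le : LW / ε ≤ C3 := by
    linarith [mul_nonneg hγ.le hK, mul_nonneg hM.le (mul_nonneg hc.le m.cast_nonneg)]
  have hC3_pos : 0 < C3 := (div_pos hLW hε).trans_le hC3_le
  have hE : ∀ s ∈ Icc 0 T, dnorm m c (ε • (Lδ (u0 s) - L0 (u0 s))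
      + γ • (Λδ (uδ s - ω • ones m) - Λ0 (uδ s - ω • ones m))) ≤ (ε * Cb + γ * Ca * R) * δ ^ 2 := by
    intro s hs
    calc _ ≤ ε * (Cb * δ ^ 2) + γ * (Ca * δ ^ 2 * R) := by
          refine (dnorm_smul_add_smul_le hc.le hε.le hγ.le _ _).trans ?_
          gcongr
          · exact hLclose s hs
          · exact (hΛclose _).trans (by gcongr; exact hubdd s hs)
      _ = _ := by ring
  intro t ht
  have key := dnorm_le_gronwallBound_of_dip_deriv_right_le hc (u := uδ - u0)
    (u' := fun s => pnacokField m c ε γ M ω W Lδ Λδ (uδ s) - pnacokField m c ε γ M ω W L0 Λ0 (u0 s))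
    (δ := 0) (ε := (ε * Cb + γ * Ca * R) * δ ^ 2) (a := 0) (b := T)
    (fun s hs => ((hodeδ s hs).sub (hode0 s hs)).continuousAt.continuousWithinAt)
    (fun s hs => ((hodeδ s (Ico_subset_Icc_self hs)).sub
      (hode0 s (Ico_subset_Icc_self hs))).hasDerivWithinAt)
    (by simp [hinit, dnorm_zero])
    (fun s hs => dip_pnacokField_sub_pnacokField_le_of_dnorm_le hc.le hε hγ.le hM.le hLδpsd hΛ0psd
      (abs_deriv_sub_deriv_le hW hW2) hC3_le (hE s (Ico_subset_Icc_self hs)))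
    (fun s hs h0 => by
      rw [Pi.sub_apply, sub_eq_zero] at h0
      simpa only [h0, dnorm_pnacokField_sub_pnacokField] using hE s (Ico_subset_Icc_self hs))
    t ht
  rw [gronwallBound_of_K_ne_0 hC3_pos.ne'] at key
  simpa only [zero_mul, zero_add, sub_zero, Pi.sub_apply] using key

theorem semidiscrete_pNACOK_asymptotic_compatibility (m : ℕ) (hm : 1 ≤ m)
    (c : ℝ) (hc : 0 < c)
    (Lδ Λδ L0 Λ0 : (Fin m → ℝ) →ₗ[ℝ] (Fin m → ℝ))
    (hLδsa : ∀ f g, dip m c (Lδ f) g = dip m c f (Lδ g))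
    (hLδpsd : ∀ f, 0 ≤ dip m c (Lδ f) f)
    (hΛδsa : ∀ f g, dip m c (Λδ f) g = dip m c f (Λδ g))
    (hΛδpsd : ∀ f, 0 ≤ dip m c (Λδ f) f)
    (hL0sa : ∀ f g, dip m c (L0 f) g = dip m c f (L0 g))
    (hL0psd : ∀ f, 0 ≤ dip m c (L0 f) f)
    (hΛ0sa : ∀ f g, dip m c (Λ0 f) g = dip m c f (Λ0 g))
    (hΛ0psd : ∀ f, 0 ≤ dip m c (Λ0 f) f)
    (K : ℝ) (hK : 0 ≤ K)
    (hΛ0bdd : ∀ f g, dip m c (Λ0 f) g ≤ K * dnorm m c f * dnorm m c g)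
    (Ca : ℝ) (hCa : 0 ≤ Ca) (δ : ℝ) (hδ : 0 < δ)
    (hΛclose : ∀ v : Fin m → ℝ, dnorm m c (Λδ v - Λ0 v) ≤ Ca * δ ^ 2 * dnorm m c v)
    (W : ℝ → ℝ) (hW : ContDiff ℝ 2 W)
    (LW : ℝ) (hLW : 0 < LW) (hW2 : ∀ s : ℝ, |deriv (deriv W) s| ≤ LW)
    (ε γ M : ℝ) (hε : 0 < ε) (hγ : 0 < γ) (hM : 0 < M) (ω : ℝ)
    (T : ℝ) (hT : 0 < T)
    (uδ u0 : ℝ → (Fin m → ℝ))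
    (hodeδ : ∀ t ∈ Set.Icc (0:ℝ) T, HasDerivAt uδ
      (-(ε • Lδ (uδ t)) - (1 / ε) • (fun j => deriv W (uδ t j))
        - γ • Λδ (uδ t - ω • ones m)
        - (M * dip m c (uδ t - ω • ones m) (ones m)) • ones m) t)
    (hode0 : ∀ t ∈ Set.Icc (0:ℝ) T, HasDerivAt u0
      (-(ε • L0 (u0 t)) - (1 / ε) • (fun j => deriv W (u0 t j))
        - γ • Λ0 (u0 t - ω • ones m)
        - (M * dip m c (u0 t - ω • ones m) (ones m)) • ones m) t)
    (hinit : uδ 0 = u0 0)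
    (Cb : ℝ) (hCb : 0 ≤ Cb)
    (hLclose : ∀ t ∈ Set.Icc (0:ℝ) T, dnorm m c (Lδ (u0 t) - L0 (u0 t)) ≤ Cb * δ ^ 2)
    (R : ℝ) (hR : 0 ≤ R)
    (hubdd : ∀ t ∈ Set.Icc (0:ℝ) T, dnorm m c (uδ t - ω • ones m) ≤ R) :
    ∀ t ∈ Set.Icc (0:ℝ) T,
      dnorm m c (uδ t - u0 t)
        ≤ ((ε * Cb + γ * Ca * R) * δ ^ 2 / (LW / ε + γ * K + M * (c * m)))
            * (Real.exp ((LW / ε + γ * K + M * (c * m)) * t) - 1) :=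
  semidiscrete_pNACOK_asymptotic_compatibility_general m c hc Lδ Λδ L0 Λ0 hLδpsd hΛ0psd K hK Ca hCa
    δ hΛclose W hW LW hLW hW2 ε γ M hε hγ hM ω T uδ u0 hodeδ hode0 hinit Cb hLclose R hubdd
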